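/- Let X : ℝ³ → ℝ³ be a smooth divergence-free vector field and let Y, Z : ℝ³ → ℝ³ be smooth compactly supported vector fields. Then ∫_{ℝ³} ⟨Y, ∇_Z X − ∇_X Z⟩ dx = ∫_{ℝ³} ⟨∇_X Y + (∇ᵀX)Y, Z⟩ dx. (This is the integration-by-parts identity characterizing the L²-transpose of the adjoint operator ad(X): up to the Leray projection, ad(X)ᵀY = ∇_X Y + (∇ᵀX)Y.) -/

import Mathlib

open MeasureTheory Matrix

noncomputable section

/-- Vector fields on ℝ³ modeled as functions `Fin 3 → ℝ`. -/
abbrev V3 := Fin 3 → ℝ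

/-- Partial derivative `∂ᵢ f` of a scalar function. -/
noncomputable def pd (i : Fin 3) (f : V3 → ℝ) (x : V3) : ℝ :=
  fderiv ℝ f x (Pi.single i 1)

/-- Curl of a vector field on ℝ³. -/
noncomputable def vcurl (v : V3 → V3) (x : V3) : V3 :=
  ![pd 1 (fun y => v y 2) x - pd 2 (fun y => v y 1) x,
    pd 2 (fun y => v y 0) x - pd 0 (fun y => v y 2) x,
    pd 0 (fun y => v y 1) x - pd 1 (fun y => v y 0) x]

/-- Divergence of a vector field on ℝ³. -/
noncomputable def vdiv (v : V3 → V3) (x : V3) : ℝ :=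
  pd 0 (fun y => v y 0) x + pd 1 (fun y => v y 1) x + pd 2 (fun y => v y 2) x

/-- Jacobian matrix `Dg(x)` of a map `g : ℝ³ → ℝ³`, `(jac g x) i j = ∂ⱼ gⁱ (x)`. -/
noncomputable def jac (g : V3 → V3) (x : V3) : Matrix (Fin 3) (Fin 3) ℝ :=
  fun i j => pd j (fun y => g y i) x

/-- Euclidean inner product on ℝ³. -/
def dot (a b : V3) : ℝ := ∑ i, a i * b i

/-- Helicity of a vector field. -/
noncomputable def Hel (v : V3 → V3) : ℝ := ∫ x : V3, dot (v x) (vcurl v x)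

/-- Directional (covariant) derivative `∇_X Y = (X·∇)Y`. -/
noncomputable def covD (X Y : V3 → V3) (x : V3) : V3 :=
  fun i => ∑ j, X x j * pd j (fun y => Y y i) x

/-- The operator `(∇ᵀX)Y`, with i-th component `Σ_j (∂_i X^j) Y^j`. -/
noncomputable def gradT (X Y : V3 → V3) (x : V3) : V3 :=
  fun i => ∑ j, pd i (fun y => X y j) x * Y x j

/-! ### Auxiliary lemmas -/

lemma pd_continuous {g : V3 → ℝ} (hg : ContDiff ℝ (⊤ : ℕ∞) g) (j : Fin 3) :
    Continuous (pd j g) :=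
  (hg.continuous_fderiv (by simp)).clm_apply continuous_const

lemma pd_hcs {g : V3 → ℝ} (hg : HasCompactSupport g) (j : Fin 3) :
    HasCompactSupport (pd j g) :=
  hg.fderiv_apply ℝ (Pi.single j 1)

lemma comp_contDiff {Y : V3 → V3} (hY : ContDiff ℝ (⊤ : ℕ∞) Y) (i : Fin 3) :
    ContDiff ℝ (⊤ : ℕ∞) (fun y => Y y i) :=
  (contDiff_pi.mp hY) i

lemma comp_hcs {Y : V3 → V3} (hY : HasCompactSupport Y) (i : Fin 3) :
    HasCompactSupport (fun y => Y y i) :=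
  hY.comp_left (g := fun v : V3 => v i) rfl

lemma pd_mul {g h : V3 → ℝ} (hg : Differentiable ℝ g) (hh : Differentiable ℝ h)
    (j : Fin 3) (x : V3) :
    pd j (fun y => g y * h y) x = pd j g x * h x + g x * pd j h x := by
  simp only [pd, fderiv_fun_mul (hg x) (hh x), ContinuousLinearMap.add_apply,
    ContinuousLinearMap.smul_apply, smul_eq_mul]
  ring

lemma pd_dot {Y Z : V3 → V3} (hY : ContDiff ℝ (⊤ : ℕ∞) Y) (hZ : ContDiff ℝ (⊤ : ℕ∞) Z)
    (j : Fin 3) (x : V3) :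
    pd j (fun y => dot (Y y) (Z y)) x
      = ∑ i, (pd j (fun y => Y y i) x * Z x i + Y x i * pd j (fun y => Z y i) x) := by
  have hYi : ∀ i, DifferentiableAt ℝ (fun y => Y y i) x :=
    fun i => ((comp_contDiff hY i).differentiable (by simp)) x
  have hZi : ∀ i, DifferentiableAt ℝ (fun y => Z y i) x :=
    fun i => ((comp_contDiff hZ i).differentiable (by simp)) x
  have h : ∀ i ∈ Finset.univ, DifferentiableAt ℝ (fun y => Y y i * Z y i) x :=
    fun i _ => (hYi i).mul (hZi i)
  simp only [dot, pd, fderiv_fun_sum h, ContinuousLinearMap.sum_apply]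
  refine Finset.sum_congr rfl fun i _ => ?_
  have := pd_mul (g := fun y => Y y i) (h := fun y => Z y i)
    ((comp_contDiff hY i).differentiable (by simp)) ((comp_contDiff hZ i).differentiable (by simp)) j x
  simpa [pd] using this

/-- Key lemma: if `div X = 0` and `f` is smooth compactly supported,
then `∫ X·∇f = 0`. -/
lemma integral_Xgrad_eq_zero (X : V3 → V3) (hX : ContDiff ℝ (⊤ : ℕ∞) X) (hXdiv : ∀ x, vdiv X x = 0)
    (f : V3 → ℝ) (hf : ContDiff ℝ (⊤ : ℕ∞) f) (hfs : HasCompactSupport f) :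
    ∫ x : V3, ∑ j, X x j * pd j f x = 0 := by
  have hfc : Continuous f := hf.continuous
  have hXj : ∀ j, Continuous (fun x => X x j) := fun j => (comp_contDiff hX j).continuous
  have hpdf : ∀ j, Continuous (pd j f) := fun j => pd_continuous hf j
  have hpdX : ∀ i j, Continuous (pd j (fun y => X y i)) :=
    fun i j => pd_continuous (comp_contDiff hX i) j
  have key : ∀ j : Fin 3, ∫ x : V3, X x j * pd j f x
      = - ∫ x : V3, pd j (fun y => X y j) x * f x := by
    intro j
    have h1 : Integrable (fun x : V3 => fderiv ℝ (fun y => X y j) x (Pi.single j 1) * f x) := by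
      exact ((hpdX j j).mul hfc).integrable_of_hasCompactSupport (hfs.mul_left)
    have h2 : Integrable (fun x : V3 => X x j * fderiv ℝ f x (Pi.single j 1)) := by
      exact ((hXj j).mul (hpdf j)).integrable_of_hasCompactSupport ((pd_hcs hfs j).mul_left)
    have h3 : Integrable (fun x : V3 => X x j * f x) := by
      exact ((hXj j).mul hfc).integrable_of_hasCompactSupport (hfs.mul_left)
    have := integral_mul_fderiv_eq_neg_fderiv_mul_of_integrable (v := Pi.single j 1)
      h1 h2 h3 (fun x _ => (comp_contDiff hX j).differentiable (by simp) x) (fun x _ => hf.differentiable (by simp) x)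
    simpa [pd] using this
  have hint : ∀ j : Fin 3, Integrable (fun x : V3 => X x j * pd j f x) := by
    intro j
    exact ((hXj j).mul (hpdf j)).integrable_of_hasCompactSupport ((pd_hcs hfs j).mul_left)
  rw [integral_finset_sum _ (fun j _ => hint j)]
  have : ∀ j : Fin 3, ∫ x : V3, X x j * pd j f x
      = ∫ x : V3, - (pd j (fun y => X y j) x * f x) := by
    intro j; rw [key j, ← integral_neg]
  rw [Finset.sum_congr rfl fun j _ => this j]
  rw [← integral_finset_sum]
  · have : ∀ x : V3, ∑ j : Fin 3, -(pd j (fun y => X y j) x * f x) = - (vdiv X x * f x) := by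
      intro x
      simp only [Fin.sum_univ_three, vdiv]
      ring
    simp only [this, hXdiv, zero_mul, neg_zero, integral_zero]
  · intro j _
    exact (((hpdX j j).mul hfc).integrable_of_hasCompactSupport (hfs.mul_left)).neg

theorem ad_transpose_integration_by_parts (X Y Z : V3 → V3)
    (hX : ContDiff ℝ (⊤ : ℕ∞) X) (hXdiv : ∀ x, vdiv X x = 0)
    (hY : ContDiff ℝ (⊤ : ℕ∞) Y) (hYsupp : HasCompactSupport Y)
    (hZ : ContDiff ℝ (⊤ : ℕ∞) Z) (hZsupp : HasCompactSupport Z) :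
    ∫ x : V3, dot (Y x) (covD Z X x - covD X Z x)
      = ∫ x : V3, dot (covD X Y x + gradT X Y x) (Z x) := by
  set f : V3 → ℝ := fun y => dot (Y y) (Z y) with hf_def
  have hf : ContDiff ℝ (⊤ : ℕ∞) f := by
    apply ContDiff.sum
    intro i _
    exact (comp_contDiff hY i).mul (comp_contDiff hZ i)
  have hfs : HasCompactSupport f := by
    apply HasCompactSupport.intro (hZsupp.isCompact)
    intro x hx
    have hx0 : Z x = 0 := image_eq_zero_of_notMem_tsupport hx
    simp [hf_def, dot, hx0]
  -- pointwise identity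
  have hpt : ∀ x : V3, dot (Y x) (covD Z X x - covD X Z x)
      = dot (covD X Y x + gradT X Y x) (Z x) - ∑ j, X x j * pd j f x := by
    intro x
    have hd := pd_dot hY hZ
    simp only [dot, covD, gradT, Pi.sub_apply, Pi.add_apply, Fin.sum_univ_three]
    rw [hd 0 x, hd 1 x, hd 2 x]
    simp only [Fin.sum_univ_three]
    ring
  -- integrability
  have hcontpd : ∀ (W : V3 → V3), ContDiff ℝ (⊤ : ℕ∞) W → ∀ i j, Continuous (pd j (fun y => W y i)) :=
    fun W hW i j => pd_continuous (comp_contDiff hW i) j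
  have hRHSint : Integrable (fun x : V3 => dot (covD X Y x + gradT X Y x) (Z x)) := by
    apply Continuous.integrable_of_hasCompactSupport
    · apply continuous_finset_sum
      intro i _
      apply Continuous.mul
      · apply Continuous.add
        · exact continuous_finset_sum _ fun j _ =>
            ((comp_contDiff hX j).continuous).mul (hcontpd Y hY i j)
        · exact continuous_finset_sum _ fun j _ =>
            (hcontpd X hX j i).mul ((comp_contDiff hY j).continuous)
      · exact (comp_contDiff hZ i).continuous
    · apply HasCompactSupport.intro (hZsupp.isCompact)
      intro x hx
      have hx0 : Z x = 0 := image_eq_zero_of_notMem_tsupport hx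
      simp [dot, hx0]
  have hI2int : Integrable (fun x : V3 => ∑ j, X x j * pd j f x) := by
    apply integrable_finset_sum
    intro j _
    exact (((comp_contDiff hX j).continuous).mul (pd_continuous hf j)).integrable_of_hasCompactSupport
      ((pd_hcs hfs j).mul_left)
  calc ∫ x : V3, dot (Y x) (covD Z X x - covD X Z x)
      = ∫ x : V3, (dot (covD X Y x + gradT X Y x) (Z x) - ∑ j, X x j * pd j f x) := by
        exact integral_congr_ae (Filter.Eventually.of_forall hpt)
    _ = (∫ x : V3, dot (covD X Y x + gradT X Y x) (Z x)) - ∫ x : V3, ∑ j, X x j * pd j f x :=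
        integral_sub hRHSint hI2int
    _ = ∫ x : V3, dot (covD X Y x + gradT X Y x) (Z x) := by
        rw [integral_Xgrad_eq_zero X hX hXdiv f hf hfs, sub_zero]
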